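/- arXiv:1603.09595 — 4 statements merged into one kernel-verified Lean document; each statement's English description precedes it below -/
import Mathlib

section
/- If A is an integer m×n matrix with all entries bounded in absolute value by Δ, and the system A·x = 0 has a nonzero integer solution, then it has a nonzero integer solution d with support of size at most m+1. -/
/-- If `A` is an integer `m × n` matrix with all entries bounded in absolute value by `Δ`,
and `A x = 0` has a nonzero integer solution, then it has a nonzero integer solution `d`
whose support has size at most `m + 1`. -/
theorem small_support_kernel_vector (m n : ℕ) (Δ : ℕ)
    (A : Matrix (Fin m) (Fin n) ℤ)
    (hΔ : ∀ i j, |A i j| ≤ (Δ : ℤ))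
    (hker : ∃ x : Fin n → ℤ, x ≠ 0 ∧ A.mulVec x = 0) :
    ∃ d : Fin n → ℤ, d ≠ 0 ∧ A.mulVec d = 0 ∧
      (Finset.univ.filter (fun j => d j ≠ 0)).card ≤ m + 1 := by
  obtain ⟨x, hx, hAx⟩ := hker
  set S : Finset (Fin n) := Finset.univ.filter (fun j => x j ≠ 0) with hS
  by_cases hcard : S.card ≤ m + 1
  · exact ⟨x, hx, hAx, hcard⟩
  · push_neg at hcard
    obtain ⟨T, hTS, hT⟩ := Finset.exists_subset_card_eq (le_of_lt hcard)
    have e := T.orderIsoOfFin hT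
    set f : Fin (m + 1) → (Fin m → ℤ) := fun k i => A i (e k) with hf
    have hdep : ¬ LinearIndependent ℤ f := by
      intro h
      have := h.fintype_card_le_finrank
      simp [Module.finrank_pi] at this
    rw [Fintype.not_linearIndependent_iff] at hdep
    obtain ⟨g, hg0, k₀, hk₀⟩ := hdep
    have einj : Function.Injective (fun k => (e k : Fin n)) := by
      intro a b hab
      exact e.injective (Subtype.ext hab)
    set d : Fin n → ℤ := fun j => ∑ k, if j = (e k : Fin n) then g k else 0 with hd
    have hdval : ∀ k, d (e k) = g k := by
      intro k
      have hrfl : d (e k) = ∑ k', if ((e k : Fin n) = (e k' : Fin n)) then g k' else 0 := rfl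
      rw [hrfl]
      rw [Finset.sum_eq_single k (fun k' _ hne => if_neg (fun h => hne (einj h).symm)) (by simp)]
      simp
    refine ⟨d, ?_, ?_, ?_⟩
    · intro h
      apply hk₀
      have := congrFun h (e k₀)
      rwa [hdval k₀] at this
    · funext i
      have hzero := congrFun hg0 i
      simp only [Finset.sum_apply, Pi.smul_apply, Pi.zero_apply, smul_eq_mul, hf] at hzero
      simp only [Matrix.mulVec, dotProduct, hd, Pi.zero_apply]
      calc (∑ j, A i j * ∑ k, if j = (e k : Fin n) then g k else 0)
          = ∑ j, ∑ k, A i j * (if j = (e k : Fin n) then g k else 0) := by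
            simp [Finset.mul_sum]
        _ = ∑ k, ∑ j, A i j * (if j = (e k : Fin n) then g k else 0) := Finset.sum_comm
        _ = ∑ k, A i (e k) * g k := by
            apply Finset.sum_congr rfl
            intro k _
            simp [mul_ite]
        _ = 0 := by rw [← hzero]; apply Finset.sum_congr rfl; intro k _; ring
    · calc (Finset.univ.filter (fun j => d j ≠ 0)).card ≤ T.card := by
            apply Finset.card_le_card
            intro j hj
            simp only [Finset.mem_filter] at hj
            by_contra hjT
            apply hj.2
            rw [hd]
            apply Finset.sum_eq_zero
            intro k _
            rw [if_neg]
            intro h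
            exact hjT (h ▸ (e k).2)
        _ = m + 1 := hT
end

section
/- Let A be an integer m×n matrix with entries bounded in absolute value by Δ. If the kernel of A contains a nonzero integer vector, then it contains a nonzero integer vector d with ‖d‖_∞ ≤ (m+2)·(m·Δ)^m. -/
/-!
Take a set `R` of `r = rank A` rows spanning the row space of `A` over `ℚ`. As the kernel is
nontrivial, `r < n`, and an integer vector lies in `ker A` as soon as the rows in `R` kill it.
Siegel's lemma for the `r × (r + 1)` submatrix on `R` and the first `r + 1` columns gives a
nonzero kernel vector with entries at most `((r + 1) Δ) ^ r ≤ ((m + 1) Δ) ^ m`, and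
`(m + 1) ^ m ≤ e m ^ m ≤ (m + 2) m ^ m`.
-/

open Matrix Module

namespace Matrix

variable {m n K : Type*} [Fintype n]

theorem mulVec_extend_zero {β R : Type*} [Fintype β] [Semiring R]
    (A : Matrix m n R) {e : β → n} (he : e.Injective) (t : β → R) :
    A *ᵥ Function.extend e t 0 = A.submatrix id e *ᵥ t := by
  funext i
  refine (Fintype.sum_of_injective e he _ _ (fun j hj => ?_) fun b => ?_).symm
  · simp [Function.extend_apply' _ _ _ hj]
  · simp [he.extend_apply]

variable [Field K]

theorem rank_lt_card_width_of_mulVec_eq_zero (A : Matrix m n K) {x : n → K} (hx : x ≠ 0)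
    (hAx : A *ᵥ x = 0) : A.rank < Fintype.card n := by
  have hker : 0 < finrank K (LinearMap.ker A.mulVecLin) :=
    finrank_pos_iff_exists_ne_zero.mpr ⟨⟨x, hAx⟩, fun h => hx (congrArg Subtype.val h)⟩
  have := LinearMap.finrank_range_add_finrank_ker A.mulVecLin
  rw [finrank_fintype_fun_eq_card] at this
  rw [rank]
  omega

theorem exists_finset_card_eq_rank_forall_mulVec_eq_zero [Finite m] (A : Matrix m n K) :
    ∃ R : Finset m, R.card = A.rank ∧
      ∀ x, (∀ i ∈ R, (A *ᵥ x) i = 0) → A *ᵥ x = 0 := by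
  classical
  obtain ⟨b, -, -, hspan, hind⟩ :=
    exists_linearIndepOn_extension (linearIndepOn_empty K A.row) (Set.empty_subset Set.univ)
  have : Fintype b := Fintype.ofFinite b
  have hspan' : Submodule.span K (A.row '' b) = Submodule.span K (Set.range A.row) := by
    rw [← Set.image_univ]
    exact le_antisymm (Submodule.span_mono (Set.image_mono (Set.subset_univ _)))
      (Submodule.span_le.mpr hspan)
  refine ⟨b.toFinset, ?_, fun x hx => ?_⟩
  · rw [rank_eq_finrank_span_row, ← hspan', Set.image_eq_range, finrank_span_eq_card hind,
      Set.toFinset_card]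
  · have hrows : Set.range A.row ⊆ LinearMap.ker (dotProductBilin K K |>.flip x) := by
      rw [← Submodule.span_le, ← hspan', Submodule.span_le]
      rintro _ ⟨i, hi, rfl⟩
      exact hx i (Set.mem_toFinset.mpr hi)
    funext i
    exact hrows ⟨i, rfl⟩

theorem exists_finset_card_lt_card_forall_mulVec_eq_zero [Finite m] (A : Matrix m n ℤ)
    {x : n → ℤ} (hx : x ≠ 0) (hAx : A *ᵥ x = 0) :
    ∃ R : Finset m, R.card < Fintype.card n ∧
      ∀ y, (∀ i ∈ R, (A *ᵥ y) i = 0) → A *ᵥ y = 0 := by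
  have hcast (y : n → ℤ) : A.map ((↑) : ℤ → ℚ) *ᵥ ((↑) ∘ y) = (↑) ∘ (A *ᵥ y) :=
    funext fun i => (RingHom.map_mulVec (Int.castRingHom ℚ) A y i).symm
  obtain ⟨R, hRrank, hR⟩ := (A.map ((↑) : ℤ → ℚ)).exists_finset_card_eq_rank_forall_mulVec_eq_zero
  refine ⟨R, hRrank ▸ rank_lt_card_width_of_mulVec_eq_zero _ (x := (↑) ∘ x) ?_ ?_,
    fun y hy => ?_⟩
  · exact fun h => hx (funext fun j => by simpa using congrFun h j)
  · simp [hcast, hAx]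
  · have := hR ((↑) ∘ y) fun i hi => by simp [hcast, hy i hi]
    funext i
    simpa [hcast] using congrFun this i

end Matrix

namespace Int.Matrix

attribute [local instance] Matrix.seminormedAddCommGroup

theorem exists_ne_zero_mulVec_eq_zero_abs_le {α β : Type*} [Fintype α] [Fintype β]
    (A : Matrix α β ℤ) (hcard : Fintype.card β = Fintype.card α + 1) {Δ : ℕ} (hΔ1 : 1 ≤ Δ)
    (hΔ : ∀ i j, |A i j| ≤ Δ) :
    ∃ t : β → ℤ, t ≠ 0 ∧ A *ᵥ t = 0 ∧
      ∀ j, |t j| ≤ (((Fintype.card α + 1) * Δ) ^ Fintype.card α : ℕ) := by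
  rcases (Fintype.card α).eq_zero_or_pos with hα | hα
  · have : IsEmpty α := Fintype.card_eq_zero_iff.mp hα
    have : Nonempty β := Fintype.card_pos_iff.mp (by omega)
    exact ⟨1, one_ne_zero, Subsingleton.elim _ _, fun j => by simp⟩
  obtain ⟨t, ht0, hAt, ht⟩ := exists_ne_zero_int_vec_norm_le A (by omega) hα
  have hA : max 1 ‖A‖ ≤ Δ := max_le (mod_cast hΔ1) <|
    (Matrix.norm_le_iff (by positivity)).mpr fun i j => by
      simpa [Int.norm_eq_abs] using (Int.cast_le (R := ℝ)).mpr (hΔ i j)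
  refine ⟨t, ht0, hAt, fun j => ?_⟩
  have : ‖t‖ ≤ ((Fintype.card α + 1) * Δ : ℝ) ^ Fintype.card α := by
    calc ‖t‖ ≤ _ := ht
      _ = (Fintype.card β * max 1 ‖A‖) ^ Fintype.card α := by
        rw [hcard]; push_cast; rw [add_sub_cancel_left, div_one, Real.rpow_natCast]
      _ ≤ _ := by rw [hcard]; push_cast; gcongr
  have htj := (norm_le_pi_norm t j).trans this
  rw [Int.norm_eq_abs] at htj
  exact_mod_cast htj

end Int.Matrix

namespace Nat

theorem succ_pow_le_add_two_mul_pow (m : ℕ) : (m + 1) ^ m ≤ (m + 2) * m ^ m := by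
  rcases m.eq_zero_or_pos with rfl | hm
  · simp
  have hm' : (0 : ℝ) < m := mod_cast hm
  have key : ((m : ℝ) + 1) ^ m ≤ (m + 2) * m ^ m :=
    calc ((m : ℝ) + 1) ^ m = (1 + (m : ℝ)⁻¹) ^ m * m ^ m := by
          rw [← mul_pow]; congr 1; field_simp
      _ ≤ Real.exp 1 * m ^ m := by gcongr; exact Real.one_add_inv_pow_le_exp
      _ ≤ (m + 2) * m ^ m := by
          gcongr
          have : (1 : ℝ) ≤ m := mod_cast hm
          linarith [Real.exp_one_lt_d9]
  exact_mod_cast key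

theorem succ_mul_pow_le {r m Δ : ℕ} (hrm : r ≤ m) (hΔ : 1 ≤ Δ) :
    ((r + 1) * Δ) ^ r ≤ (m + 2) * (m * Δ) ^ m :=
  calc ((r + 1) * Δ) ^ r ≤ ((m + 1) * Δ) ^ m :=
        (Nat.pow_le_pow_left (by gcongr) r).trans (Nat.pow_le_pow_right (by positivity) hrm)
    _ = (m + 1) ^ m * Δ ^ m := mul_pow ..
    _ ≤ (m + 2) * m ^ m * Δ ^ m := by gcongr; exact succ_pow_le_add_two_mul_pow m
    _ = (m + 2) * (m * Δ) ^ m := by ring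

end Nat

/-- If the kernel of an integer matrix `A` with entries bounded by `Δ ≥ 1` contains a
nonzero integer vector, it contains one with sup-norm at most `(m+2) * (m*Δ)^m`. -/
theorem small_norm_kernel_vector (m n : ℕ) (Δ : ℕ) (hΔ1 : 1 ≤ Δ)
    (A : Matrix (Fin m) (Fin n) ℤ)
    (hΔ : ∀ i j, |A i j| ≤ (Δ : ℤ))
    (hker : ∃ x : Fin n → ℤ, x ≠ 0 ∧ A.mulVec x = 0) :
    ∃ d : Fin n → ℤ, d ≠ 0 ∧ A.mulVec d = 0 ∧
      ∀ j, |d j| ≤ ((m + 2) * (m * Δ) ^ m : ℕ) := by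
  obtain ⟨x, hx, hAx⟩ := hker
  obtain ⟨R, hRn, hR⟩ := A.exists_finset_card_lt_card_forall_mulVec_eq_zero hx hAx
  let e : Fin (R.card + 1) ↪ Fin n := Fin.castLEEmb (by simpa using hRn)
  obtain ⟨t, ht, hAt, ht_le⟩ := Int.Matrix.exists_ne_zero_mulVec_eq_zero_abs_le
    (A.submatrix ((↑) : R → Fin m) e) (by simp) hΔ1 fun i j => hΔ _ _
  have hB : ((R.card + 1) * Δ) ^ R.card ≤ (m + 2) * (m * Δ) ^ m :=
    Nat.succ_mul_pow_le (by simpa using R.card_le_univ) hΔ1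
  refine ⟨Function.extend e t 0, fun h => ht ?_, hR _ fun i hi => ?_, fun j => ?_⟩
  · funext b
    simpa [e.injective.extend_apply] using congrFun h (e b)
  · rw [A.mulVec_extend_zero e.injective]
    exact congrFun hAt ⟨i, hi⟩
  · by_cases hj : ∃ b, e b = j
    · obtain ⟨b, rfl⟩ := hj
      rw [e.injective.extend_apply]
      exact (ht_le b).trans (by rw [Fintype.card_coe]; exact_mod_cast hB)
    · rw [Function.extend_apply' _ _ _ hj]
      simp only [Pi.zero_apply, abs_zero, Nat.cast_nonneg]
end

section
/- Let A ∈ ℤ^{m×n} with entries bounded in absolute value by Δ, b ∈ ℤ^m, c ∈ ℝ^n. Suppose c^T y ≠ 0 for every nonzero integer vector y with ‖y‖_∞ ≤ (m+2)·(m·Δ)^m. If the integer program max{c^T x : Ax = b, x ≥ 0, x ∈ ℤ^n} has an optimal solution, then it has an optimal solution x* such that at least n − m components of x* are bounded by (m+2)·(m·Δ)^m, and the columns of A corresponding to components of x* exceeding (m+2)·(m·Δ)^m are linearly independent. -/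
/-!
Let `B = (m+2)(mΔ)^m` and let `x` be any optimal solution. If the columns of `A` on which `x`
exceeds `B` were dependent, Siegel's lemma, applied to a row basis of these columns, would give
a nonzero integral kernel vector `g` supported there with `‖g‖∞ ≤ ((m+1)·max 1 Δ)^m ≤ B`.
Then `|g| ≤ x`, so `x + g` and `x - g` are both feasible and optimality forces `cᵀg = 0`,
contradicting the hypothesis on `c`. Independence of these columns leaves at most `m` large
components. When `B = 0` the matrix vanishes and `0` itself is optimal.
-/

attribute [local instance] Matrix.seminormedAddCommGroup

open Matrix Function Submodule

theorem succ_pow_le_add_two_mul_pow (m : ℕ) : (m + 1) ^ m ≤ (m + 2) * m ^ m := by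
  rcases Nat.eq_zero_or_pos m with rfl | hm
  · norm_num
  have hm' : (0 : ℝ) < m := by exact_mod_cast hm
  have he : (1 + (m : ℝ)⁻¹) ^ m ≤ m + 2 := by
    have h3 : (1 : ℝ) + 2 ≤ m + 2 := by gcongr; exact_mod_cast hm
    linarith [Real.one_add_inv_pow_le_exp (n := m), Real.exp_one_lt_d9]
  have : ((m : ℝ) + 1) ^ m ≤ (m + 2) * m ^ m := by
    calc ((m : ℝ) + 1) ^ m = (1 + (m : ℝ)⁻¹) ^ m * m ^ m := by
          rw [← mul_pow]; congr 1; field_simp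
      _ ≤ (m + 2) * m ^ m := by gcongr
  exact_mod_cast this

theorem succ_mul_max_one_pow_le {m Δ : ℕ} (h : (m + 2) * (m * Δ) ^ m ≠ 0) :
    ((m + 1) * max 1 (Δ : ℝ)) ^ m ≤ ((m + 2) * (m * Δ) ^ m : ℕ) := by
  rcases Nat.eq_zero_or_pos Δ with rfl | hΔ
  · obtain rfl : m = 0 := by simpa using h
    norm_num
  rw [max_eq_right (by exact_mod_cast hΔ), mul_pow, mul_pow]
  have := succ_pow_le_add_two_mul_pow m
  push_cast
  rw [← mul_assoc]
  gcongr
  exact_mod_cast this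

theorem Matrix.norm_submatrix_le {α ρ ι ρ' ι' : Type*} [Fintype ρ] [Fintype ι] [Fintype ρ']
    [Fintype ι'] [SeminormedAddCommGroup α] (A : Matrix ρ ι α) (f : ρ' → ρ) (g : ι' → ι) :
    ‖A.submatrix f g‖ ≤ ‖A‖ :=
  (norm_le_iff (norm_nonneg A)).2 fun _ _ => norm_entry_le_entrywise_sup_norm A

theorem Matrix.mulVec_extend_zero_s2 {R ρ ι κ : Type*} [NonUnitalNonAssocSemiring R] [Fintype ι]
    [Fintype κ] (A : Matrix ρ ι R) {f : κ → ι} (hf : Injective f) (t : κ → R) :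
    A *ᵥ extend f t 0 = A.submatrix id f *ᵥ t := by
  ext i
  refine (Fintype.sum_of_injective f hf _ _ (fun j hj => ?_) fun k => ?_).symm
  · rw [extend_apply' _ _ _ hj, Pi.zero_apply, mul_zero]
  · rw [hf.extend_apply]; rfl

theorem Function.Injective.extend_zero_ne_zero {α β γ : Type*} [Zero γ] {f : α → β}
    (hf : Injective f) {t : α → γ} (ht : t ≠ 0) : extend f t 0 ≠ 0 := by
  intro h
  exact ht (funext fun a => by simpa [hf.extend_apply] using congrFun h (f a))

theorem Function.Injective.norm_extend_zero_le {E κ ι : Type*} [SeminormedAddCommGroup E]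
    [Fintype κ] [Fintype ι] {f : κ → ι} (hf : Injective f) (t : κ → E) : ‖extend f t 0‖ ≤ ‖t‖ := by
  refine (pi_norm_le_iff_of_nonneg (norm_nonneg t)).2 fun j => ?_
  by_cases hj : ∃ k, f k = j
  · obtain ⟨k, rfl⟩ := hj
    rw [hf.extend_apply]
    exact norm_le_pi_norm t k
  · rw [extend_apply' _ _ _ hj, Pi.zero_apply, norm_zero]
    exact norm_nonneg t

theorem Matrix.map_intCast_mulVec {R ρ ι : Type*} [Ring R] [Fintype ι] (A : Matrix ρ ι ℤ)
    (v : ι → ℤ) : A.map (Int.cast : ℤ → R) *ᵥ (Int.cast ∘ v) = Int.cast ∘ (A *ᵥ v) :=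
  funext fun i => (RingHom.map_mulVec (Int.castRingHom R) A v i).symm

theorem Matrix.mulVec_eq_zero_of_mem_span_rows {R ρ ι : Type*} [CommSemiring R] [Fintype ι]
    (A : Matrix ρ ι R) {s : Set ρ} (hs : ∀ i, A i ∈ span R (A '' s)) {v : ι → R}
    (hv : ∀ i ∈ s, (A *ᵥ v) i = 0) : A *ᵥ v = 0 := by
  suffices h : ∀ w ∈ span R (A '' s), w ⬝ᵥ v = 0 from funext fun i => h _ (hs i)
  intro w hw
  induction hw using Submodule.span_induction with
  | mem w hw => obtain ⟨k, hk, rfl⟩ := hw; exact hv k hk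
  | zero => exact zero_dotProduct v
  | add w w' _ _ hw hw' => rw [add_dotProduct, hw, hw', add_zero]
  | smul r w _ hw => rw [smul_dotProduct, hw, smul_zero]

theorem Matrix.exists_card_lt_forall_mulVec_eq_zero_of_not_linearIndependent {K ρ ι : Type*}
    [Field K] [Fintype ρ] [Fintype ι] (A : Matrix ρ ι K) (h : ¬LinearIndependent K Aᵀ) :
    ∃ s : Finset ρ, s.card < Fintype.card ι ∧
      ∀ v, (∀ i ∈ s, (A *ᵥ v) i = 0) → A *ᵥ v = 0 := by
  classical
  obtain ⟨κ, a, ha, hspan, hli⟩ := exists_linearIndependent' K A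
  have : Fintype κ := Fintype.ofInjective a ha
  refine ⟨Finset.univ.image a, ?_, fun v hv => A.mulVec_eq_zero_of_mem_span_rows ?_ hv⟩
  · have hcols : (Set.range Aᵀ).finrank K < Fintype.card ι :=
      (finrank_range_le_card Aᵀ).lt_of_ne
        (mt linearIndependent_iff_card_eq_finrank_span.2 h ∘ Eq.symm)
    calc (Finset.univ.image a).card = Fintype.card κ := by
          rw [Finset.card_image_of_injective _ ha, Finset.card_univ]
      _ = A.rank := by
          rw [linearIndependent_iff_card_eq_finrank_span.1 hli, rank_eq_finrank_span_row,
            Set.finrank, hspan]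
          rfl
      _ < Fintype.card ι := by rwa [rank_eq_finrank_span_cols]
  · intro i
    rw [Finset.coe_image, Finset.coe_univ, Set.image_univ,
      show A '' Set.range a = Set.range (A ∘ a) from (Set.range_comp A a).symm, hspan]
    exact subset_span (Set.mem_range_self i)

theorem Int.Matrix.exists_ne_zero_mulVec_eq_zero_norm_le_of_card_succ {κ : Type*} [Fintype κ]
    (M : Matrix κ (Fin (Fintype.card κ + 1)) ℤ) :
    ∃ t ≠ 0, M *ᵥ t = 0 ∧ ‖t‖ ≤ ((Fintype.card κ + 1) * max 1 ‖M‖) ^ Fintype.card κ := by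
  rcases Nat.eq_zero_or_pos (Fintype.card κ) with hκ | hκ
  · have : IsEmpty κ := Fintype.card_eq_zero_iff.1 hκ
    refine ⟨fun _ => 1, fun h => one_ne_zero (congrFun h 0), funext isEmptyElim, ?_⟩
    simp only [hκ, pow_zero]
    exact (pi_norm_le_iff_of_nonneg zero_le_one).2 fun _ => by simp
  · obtain ⟨t, ht, hMt, hnorm⟩ := Int.Matrix.exists_ne_zero_int_vec_norm_le M
      (by rw [Fintype.card_fin]; omega) hκ
    refine ⟨t, ht, hMt, hnorm.trans_eq ?_⟩
    rw [Fintype.card_fin]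
    push_cast
    rw [add_sub_cancel_left, div_one, Real.rpow_natCast]

/-- Restricting to a row basis (`r` rows) and to `r + 1` columns makes the exponent in Siegel's
lemma equal to `r`. -/
theorem Int.Matrix.exists_ne_zero_mulVec_eq_zero_norm_le {ρ ι : Type*} [Fintype ρ] [Fintype ι]
    (A : Matrix ρ ι ℤ) (h : ¬LinearIndependent ℚ (A.map (Int.cast : ℤ → ℚ))ᵀ) :
    ∃ t ≠ 0, A *ᵥ t = 0 ∧ ‖t‖ ≤ ((Fintype.card ρ + 1) * max 1 ‖A‖) ^ Fintype.card ρ := by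
  obtain ⟨s, hs, hker⟩ :=
    (A.map (Int.cast : ℤ → ℚ)).exists_card_lt_forall_mulVec_eq_zero_of_not_linearIndependent h
  obtain ⟨e⟩ : Nonempty (Fin (Fintype.card s + 1) ↪ ι) :=
    Function.Embedding.nonempty_of_card_le (by simpa using hs)
  obtain ⟨t, ht, hMt, hnorm⟩ :=
    exists_ne_zero_mulVec_eq_zero_norm_le_of_card_succ (A.submatrix ((↑) : s → ρ) e)
  refine ⟨extend e t 0, e.injective.extend_zero_ne_zero ht, ?_, ?_⟩
  · have hAt : A *ᵥ extend e t 0 = A.submatrix id e *ᵥ t := A.mulVec_extend_zero_s2 e.injective t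
    suffices hq : A.map (Int.cast : ℤ → ℚ) *ᵥ (Int.cast ∘ extend e t 0) = 0 by
      rw [map_intCast_mulVec] at hq
      exact funext fun i => Int.cast_injective (α := ℚ) (congrFun hq i)
    refine hker _ fun i hi => ?_
    rw [map_intCast_mulVec, hAt, Function.comp_apply, Int.cast_eq_zero]
    exact congrFun hMt ⟨i, hi⟩
  · have hcard : Fintype.card s ≤ Fintype.card ρ :=
      Fintype.card_le_of_injective _ Subtype.val_injective
    calc ‖extend e t 0‖ ≤ ‖t‖ := e.injective.norm_extend_zero_le t
      _ ≤ ((Fintype.card s + 1) * max 1 ‖A.submatrix ((↑) : s → ρ) e‖) ^ Fintype.card s := hnorm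
      _ ≤ ((Fintype.card ρ + 1) * max 1 ‖A‖) ^ Fintype.card s := by
          gcongr
          exact A.norm_submatrix_le _ _
      _ ≤ ((Fintype.card ρ + 1) * max 1 ‖A‖) ^ Fintype.card ρ :=
          pow_le_pow_right₀ (one_le_mul_of_one_le_of_one_le (by simp) (le_max_left _ _)) hcard

theorem Fintype.card_sub_finrank_le_card_filter_not {K V ι : Type*} [DivisionRing K]
    [AddCommGroup V] [Module K V] [FiniteDimensional K V] [Fintype ι] {p : ι → Prop}
    [DecidablePred p] {v : ι → V} (h : LinearIndependent K fun j : {j // p j} => v j) :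
    Fintype.card ι - Module.finrank K V ≤ (Finset.univ.filter fun j => ¬p j).card := by
  rw [← Fintype.card_subtype, Fintype.card_subtype_compl]
  exact Nat.sub_le_sub_left h.fintype_card_le_finrank _

section IntegerProgram

variable {ρ ι : Type*} [Fintype ι] {A : Matrix ρ ι ℤ} {b : ρ → ℤ} {c : ι → ℝ}
  {x : ι → ℤ}

def IsOptimal (A : Matrix ρ ι ℤ) (b : ρ → ℤ) (c : ι → ℝ) (x : ι → ℤ) : Prop :=
  (A *ᵥ x = b ∧ 0 ≤ x) ∧
    ∀ x' : ι → ℤ, A *ᵥ x' = b → 0 ≤ x' → ∑ j, c j * (x' j : ℝ) ≤ ∑ j, c j * (x j : ℝ)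

theorem IsOptimal.sum_mul_le_zero (hx : IsOptimal A b c x) {g : ι → ℤ} (hg : A *ᵥ g = 0)
    (hxg : 0 ≤ x + g) : ∑ j, c j * (g j : ℝ) ≤ 0 := by
  have := hx.2 (x + g) (by rw [mulVec_add, hg, add_zero, hx.1.1]) hxg
  simp only [Pi.add_apply, Int.cast_add, mul_add, Finset.sum_add_distrib] at this
  linarith

theorem IsOptimal.sum_mul_eq_zero (hx : IsOptimal A b c x) {g : ι → ℤ} (hg : A *ᵥ g = 0)
    (hgx : ∀ j, |g j| ≤ x j) : ∑ j, c j * (g j : ℝ) = 0 := by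
  have hpos := hx.sum_mul_le_zero hg fun j => by
    simpa [neg_le_iff_add_nonneg'] using neg_le_of_abs_le (hgx j)
  have hneg := hx.sum_mul_le_zero (g := -g) (by rw [mulVec_neg, hg, neg_zero])
    fun j => by simpa [← sub_eq_add_neg] using le_of_abs_le (hgx j)
  simp only [Pi.neg_apply, Int.cast_neg, mul_neg, Finset.sum_neg_distrib] at hneg
  linarith

theorem IsOptimal.zero (hx : IsOptimal A 0 c x) : IsOptimal A 0 c 0 := by
  refine ⟨⟨mulVec_zero A, le_rfl⟩, fun x' hx' hx'_nonneg => ?_⟩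
  simpa using hx.sum_mul_le_zero hx' (add_nonneg hx.1.2 hx'_nonneg)

theorem IsOptimal.linearIndependent_cols_of_lt [Fintype ρ] {B : ℕ} (hx : IsOptimal A b c x)
    (hc : ∀ y : ι → ℤ, y ≠ 0 → (∀ j, |y j| ≤ B) → ∑ j, c j * (y j : ℝ) ≠ 0)
    (hB : ((Fintype.card ρ + 1) * max 1 ‖A‖) ^ Fintype.card ρ ≤ B) :
    LinearIndependent ℚ fun j : {j // (B : ℤ) < x j} => fun i => (A i j.1 : ℚ) := by
  by_contra hdep
  obtain ⟨t, ht, hAt, htnorm⟩ :=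
    Int.Matrix.exists_ne_zero_mulVec_eq_zero_norm_le (A.submatrix id Subtype.val) hdep
  set g := extend (Subtype.val : {j // (B : ℤ) < x j} → ι) t 0
  have hgB : ∀ j, |g j| ≤ B := by
    have hg : ‖g‖ ≤ B := calc
      ‖g‖ ≤ ‖t‖ := Subtype.val_injective.norm_extend_zero_le t
      _ ≤ _ := htnorm
      _ ≤ ((Fintype.card ρ + 1) * max 1 ‖A‖) ^ Fintype.card ρ := by
          gcongr
          exact A.norm_submatrix_le _ _
      _ ≤ B := hB
    intro j
    exact_mod_cast (Int.norm_eq_abs _ ▸ norm_le_pi_norm g j).trans hg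
  have hgx : ∀ j, |g j| ≤ x j := by
    intro j
    by_cases hj : (B : ℤ) < x j
    · exact (hgB j).trans hj.le
    · have hgj : g j = 0 := extend_apply' t (0 : ι → ℤ) j fun ⟨k, hk⟩ => hj (hk ▸ k.2)
      rw [hgj, abs_zero]
      exact hx.1.2 j
  have hAg : A *ᵥ g = 0 := by rwa [A.mulVec_extend_zero_s2 Subtype.val_injective]
  exact hc g (Subtype.val_injective.extend_zero_ne_zero ht) hgB (hx.sum_mul_eq_zero hAg hgx)

end IntegerProgram

/-- Lemma 1: under non-degeneracy of `c`, a feasible and bounded IP in standard form has an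
optimal solution with at least `n - m` components bounded by `(m+2)(mΔ)^m`, and the columns
of `A` corresponding to larger components are linearly independent. -/
theorem optimal_solution_few_large_components (m n : ℕ) (Δ : ℕ)
    (A : Matrix (Fin m) (Fin n) ℤ) (b : Fin m → ℤ) (c : Fin n → ℝ)
    (hΔ : ∀ i j, |A i j| ≤ (Δ : ℤ))
    (hc : ∀ y : Fin n → ℤ, y ≠ 0 → (∀ j, |y j| ≤ ((m + 2) * (m * Δ) ^ m : ℕ)) →
      (∑ j, c j * (y j : ℝ)) ≠ 0)
    (hopt : ∃ x : Fin n → ℤ, (A.mulVec x = b ∧ 0 ≤ x) ∧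
      ∀ x' : Fin n → ℤ, A.mulVec x' = b → 0 ≤ x' →
        (∑ j, c j * (x' j : ℝ)) ≤ ∑ j, c j * (x j : ℝ)) :
    ∃ x : Fin n → ℤ,
      (A.mulVec x = b ∧ 0 ≤ x) ∧
      (∀ x' : Fin n → ℤ, A.mulVec x' = b → 0 ≤ x' →
        (∑ j, c j * (x' j : ℝ)) ≤ ∑ j, c j * (x j : ℝ)) ∧
      n - m ≤ (Finset.univ.filter
        (fun j => x j ≤ ((m + 2) * (m * Δ) ^ m : ℕ))).card ∧
      LinearIndependent ℚ
        (fun j : {j : Fin n // ((m + 2) * (m * Δ) ^ m : ℕ) < x j} =>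
          (fun i => (A i j.1 : ℚ))) := by
  set B := (m + 2) * (m * Δ) ^ m
  obtain ⟨x, hx⟩ : ∃ x, IsOptimal A b c x := hopt
  obtain ⟨x, hx, hind⟩ : ∃ x, IsOptimal A b c x ∧
      LinearIndependent ℚ fun j : {j // (B : ℤ) < x j} => fun i => (A i j.1 : ℚ) := by
    by_cases hB : B = 0
    · have hA : A = 0 := by
        obtain rfl : Δ = 0 := by
          simp only [B, mul_eq_zero, Nat.add_eq_zero_iff, OfNat.ofNat_ne_zero, and_false,
            Nat.pow_eq_zero, ne_eq, false_or] at hB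
          tauto
        ext i j
        simpa using hΔ i j
      obtain rfl : b = 0 := by rw [← hx.1.1, hA, zero_mulVec]
      have : IsEmpty {j // (B : ℤ) < (0 : Fin n → ℤ) j} := ⟨fun j => by simpa [hB] using j.2⟩
      exact ⟨0, hx.zero, linearIndependent_empty_type⟩
    · have hAΔ : ‖A‖ ≤ Δ := (norm_le_iff (Nat.cast_nonneg _)).2 fun i j => by
        simpa [Int.norm_eq_abs] using (Int.cast_le (R := ℝ)).2 (hΔ i j)
      refine ⟨x, hx, hx.linearIndependent_cols_of_lt hc ?_⟩
      calc ((Fintype.card (Fin m) + 1) * max 1 ‖A‖) ^ Fintype.card (Fin m)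
          ≤ ((m + 1) * max 1 (Δ : ℝ)) ^ m := by rw [Fintype.card_fin]; gcongr
        _ ≤ B := succ_mul_max_one_pow_le hB
  refine ⟨x, hx.1, hx.2, ?_, hind⟩
  have := Fintype.card_sub_finrank_le_card_filter_not (v := Aᵀ.map (Int.cast : ℤ → ℚ)) hind
  simp only [Fintype.card_fin, Module.finrank_fin_fun, not_lt] at this
  exact this
end

section
/- Let A ∈ ℤ^{(n+1)×n} be a lower-triangular-type matrix in the form (8) arising from Hermite Normal Form, with all n×n sub-determinants nonzero and bounded in absolute value by δ. Then every entry of A is bounded in absolute value by a constant C(δ) depending only on δ (explicitly, C(δ) = B_q with B_0 = δ, B_i = δ + Σ_{l=0}^{i−1} B_l · δ^{log₂δ} · (log₂δ)^{(log₂δ)/2}, q = ⌈log₂δ⌉). -/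
/-- The recursively defined bounds `B_i`: `B_0 = δ` and
`B_{i+1} = δ + (Σ_{l ≤ i} B_l) · δ^{log₂ δ} · (log₂ δ)^{(log₂ δ)/2}`. -/
noncomputable def Bseq (δ : ℕ) : ℕ → ℝ
  | 0 => δ
  | (i + 1) => δ + (∑ l ∈ (Finset.range (i + 1)).attach, Bseq δ l.1) *
      (δ : ℝ) ^ (Real.logb 2 δ) * (Real.logb 2 δ) ^ ((Real.logb 2 δ) / 2)
decreasing_by exact Finset.mem_range.mp l.2

lemma Bseq_nonneg (δ : ℕ) (hδ : 1 ≤ δ) : ∀ i, 0 ≤ Bseq δ i := by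
  intro i
  induction i using Nat.strong_induction_on with
  | _ i ih =>
    cases i with
    | zero => simp [Bseq]
    | succ m =>
      rw [Bseq]
      have h1 : 0 ≤ ∑ l ∈ (Finset.range (m + 1)).attach, Bseq δ l.1 :=
        Finset.sum_nonneg fun l _ => ih l.1 (Finset.mem_range.mp l.2)
      have h2 : 0 ≤ (δ : ℝ) ^ (Real.logb 2 δ) := Real.rpow_nonneg (by positivity) _
      have h3 : 0 ≤ Real.logb 2 (δ : ℝ) :=
        Real.logb_nonneg (by norm_num) (by exact_mod_cast hδ)
      have h4 : 0 ≤ (Real.logb 2 δ) ^ ((Real.logb 2 δ) / 2) := Real.rpow_nonneg h3 _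
      have h5 : (0:ℝ) ≤ δ := by positivity
      nlinarith [mul_nonneg (mul_nonneg h1 h2) h4]

lemma delta_le_Bseq (δ : ℕ) (hδ : 1 ≤ δ) (q : ℕ) : (δ : ℝ) ≤ Bseq δ q := by
  cases q with
  | zero => simp [Bseq]
  | succ m =>
    rw [Bseq]
    have h1 : 0 ≤ ∑ l ∈ (Finset.range (m + 1)).attach, Bseq δ l.1 :=
      Finset.sum_nonneg fun l _ => Bseq_nonneg δ hδ l.1
    have h2 : 0 ≤ (δ : ℝ) ^ (Real.logb 2 δ) := Real.rpow_nonneg (by positivity) _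
    have h3 : 0 ≤ Real.logb 2 (δ : ℝ) :=
      Real.logb_nonneg (by norm_num) (by exact_mod_cast hδ)
    have h4 : 0 ≤ (Real.logb 2 δ) ^ ((Real.logb 2 δ) / 2) := Real.rpow_nonneg h3 _
    nlinarith [mul_nonneg (mul_nonneg h1 h2) h4]

lemma one_le_prod_int {ι : Type*} (s : Finset ι) (f : ι → ℤ)
    (h : ∀ i ∈ s, 1 ≤ f i) : 1 ≤ ∏ i ∈ s, f i := by
  induction s using Finset.cons_induction with
  | empty => simp
  | cons a s ha ih =>
    rw [Finset.prod_cons]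
    have h1 : 1 ≤ f a := h a (Finset.mem_cons_self a s)
    have h2 := ih fun i hi => h i (Finset.mem_cons_of_mem hi)
    nlinarith

lemma sum_sub_one_le_prod_sub_one {ι : Type*} (s : Finset ι) (f : ι → ℤ)
    (h : ∀ i ∈ s, 1 ≤ f i) : ∑ i ∈ s, (f i - 1) ≤ ∏ i ∈ s, f i - 1 := by
  induction s using Finset.cons_induction with
  | empty => simp
  | cons a s ha ih =>
    have h1 : 1 ≤ f a := h a (Finset.mem_cons_self a s)
    have h2 : ∀ i ∈ s, 1 ≤ f i := fun i hi => h i (Finset.mem_cons_of_mem hi)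
    have hP : 1 ≤ ∏ i ∈ s, f i := one_le_prod_int s f h2
    have := ih h2
    rw [Finset.sum_cons, Finset.prod_cons]
    nlinarith

/-- Lemma 5: for a matrix in the Hermite-Normal-Form-based shape (8) whose `n × n`
sub-determinants are all nonzero and bounded by `δ`, each entry is bounded in absolute
value by the constant `C(δ) = B_{⌈log₂ δ⌉}`. -/
theorem entries_bounded_by_C_delta (n : ℕ) (δ : ℕ) (hδ : 1 ≤ δ)
    (A : Matrix (Fin (n + 1)) (Fin n) ℤ)
    (htri : ∀ i j : Fin n, i < j → A i.castSucc j = 0)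
    (hdiagpos : ∀ i : Fin n, 1 ≤ A i.castSucc i)
    (hdiagbound : ∀ i : Fin n, A i.castSucc i ≤ (δ : ℤ))
    (hreduced : ∀ i j : Fin n, j < i →
      0 ≤ A i.castSucc j ∧ A i.castSucc j < A i.castSucc i)
    (hsub : ∀ r : Fin (n + 1),
      (A.submatrix r.succAbove id).det ≠ 0 ∧
        |(A.submatrix r.succAbove id).det| ≤ (δ : ℤ)) :
    ∀ i j, (|A i j| : ℝ) ≤ Bseq δ ⌈Real.logb 2 δ⌉₊ := by
  -- entries of the triangular part are nonnegative
  have hnonneg : ∀ i j : Fin n, 0 ≤ A i.castSucc j := by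
    intro i j
    rcases lt_trichotomy i j with h | h | h
    · rw [htri i j h]
    · subst h; exact le_trans zero_le_one (hdiagpos i)
    · exact (hreduced i j h).1
  have hentry_top : ∀ i j : Fin n, |A i.castSucc j| ≤ (δ : ℤ) := by
    intro i j
    rw [abs_of_nonneg (hnonneg i j)]
    rcases lt_trichotomy i j with h | h | h
    · rw [htri i j h]; exact_mod_cast Nat.zero_le δ
    · subst h; exact hdiagbound i
    · exact le_trans (le_of_lt (hreduced i j h).2) (hdiagbound i)
  -- the top square matrix
  set T : Matrix (Fin n) (Fin n) ℤ := A.submatrix Fin.castSucc id with hTdef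
  have hTtri : T.BlockTriangular OrderDual.toDual := by
    intro i j hij
    exact htri i j hij
  have hdetT : T.det = ∏ i, A i.castSucc i := Matrix.det_of_lowerTriangular T hTtri
  have hprod_pos : ∀ (s : Finset (Fin n)), 1 ≤ ∏ i ∈ s, A i.castSucc i := fun s =>
    one_le_prod_int s _ fun i _ => hdiagpos i
  have hdetT_pos : 1 ≤ T.det := by rw [hdetT]; exact hprod_pos Finset.univ
  -- column sums of the triangular part are bounded by det T
  have hcolsum : ∀ j : Fin n, ∑ i : Fin n, A i.castSucc j ≤ T.det := by
    intro j
    have hzero : ∀ i ∈ (Finset.univ : Finset (Fin n)), i ∉ Finset.Ici j → A i.castSucc j = 0 := by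
      intro i _ hi
      exact htri i j (by simpa using hi)
    have hsum : ∑ i : Fin n, A i.castSucc j = ∑ i ∈ Finset.Ici j, A i.castSucc j :=
      (Finset.sum_subset (Finset.subset_univ _) hzero).symm
    have hIci : Finset.Ici j = insert j (Finset.Ioi j) := by
      ext x; simp [Finset.mem_Ici, Finset.mem_Ioi, le_iff_lt_or_eq, or_comm, eq_comm]
    have hsplit : ∑ i ∈ Finset.Ici j, A i.castSucc j
        = A j.castSucc j + ∑ i ∈ Finset.Ioi j, A i.castSucc j := by
      rw [hIci, Finset.sum_insert (by simp)]
    have hle1 : ∑ i ∈ Finset.Ioi j, A i.castSucc j ≤ ∑ i ∈ Finset.Ioi j, (A i.castSucc i - 1) :=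
      Finset.sum_le_sum fun i hi => by
        have := (hreduced i j (Finset.mem_Ioi.mp hi)).2; omega
    have hle2 : ∑ i ∈ Finset.Ioi j, (A i.castSucc i - 1)
        ≤ (∏ i ∈ Finset.Ioi j, A i.castSucc i) - 1 :=
      sum_sub_one_le_prod_sub_one _ _ fun i _ => hdiagpos i
    have hP : 1 ≤ ∏ i ∈ Finset.Ioi j, A i.castSucc i := hprod_pos _
    have hdj : 1 ≤ A j.castSucc j := hdiagpos j
    have hprodle : A j.castSucc j * ∏ i ∈ Finset.Ioi j, A i.castSucc i ≤ T.det := by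
      rw [hdetT]
      have : ∏ i ∈ Finset.Ici j, A i.castSucc i
          = A j.castSucc j * ∏ i ∈ Finset.Ioi j, A i.castSucc i := by
        rw [hIci, Finset.prod_insert (by simp)]
      rw [← this]
      have hsd := Finset.prod_sdiff (f := fun i : Fin n => A i.castSucc i)
        (Finset.subset_univ (Finset.Ici j))
      have h1 : 1 ≤ ∏ i ∈ Finset.univ \ Finset.Ici j, A i.castSucc i :=
        one_le_prod_int _ _ fun i _ => hdiagpos i
      have h2 : 1 ≤ ∏ i ∈ Finset.Ici j, A i.castSucc i := hprod_pos _
      nlinarith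
    nlinarith
  -- det T is the sub-determinant obtained by deleting the last row
  have hTlast : T = A.submatrix (Fin.last n).succAbove id := by
    rw [hTdef, Fin.succAbove_last]
  -- Laplace expansion with a duplicated column gives the key linear relation
  have hlast : ∀ j : Fin n, |A (Fin.last n) j| ≤ (δ : ℤ) := by
    intro j
    set B : Matrix (Fin (n + 1)) (Fin (n + 1)) ℤ :=
      Matrix.of fun i => Fin.cons (A i j) (A i) with hBdef
    have hBcol : B.det = 0 := by
      refine Matrix.det_zero_of_column_eq (i := 0) (j := j.succ) (Fin.succ_ne_zero j).symm ?_
      intro k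
      simp [hBdef]
    have hBsub : ∀ i : Fin (n + 1),
        B.submatrix i.succAbove Fin.succ = A.submatrix i.succAbove id := by
      intro i
      ext a b
      simp [hBdef]
    have hexp : (0 : ℤ) = ∑ i : Fin (n + 1),
        (-1) ^ (i : ℕ) * A i j * (A.submatrix i.succAbove id).det := by
      rw [← hBcol, Matrix.det_succ_column_zero]
      refine Finset.sum_congr rfl fun i _ => ?_
      rw [hBsub i]
      simp [hBdef]
    rw [Fin.sum_univ_castSucc] at hexp
    have hlastterm : (-1 : ℤ) ^ ((Fin.last n : Fin (n+1)) : ℕ) * A (Fin.last n) j *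
        (A.submatrix (Fin.last n).succAbove id).det = (-1) ^ n * A (Fin.last n) j * T.det := by
      rw [hTlast]; simp
    rw [hlastterm] at hexp
    have habs : |A (Fin.last n) j| * T.det
        = |(-1 : ℤ) ^ n * A (Fin.last n) j * T.det| := by
      rw [abs_mul, abs_mul, abs_pow, abs_neg, abs_one, one_pow, one_mul,
        abs_of_nonneg (le_trans zero_le_one hdetT_pos)]
    have hsumbound : |∑ i : Fin n, (-1 : ℤ) ^ ((i.castSucc : Fin (n+1)) : ℕ) * A i.castSucc j *
        (A.submatrix (i.castSucc : Fin (n+1)).succAbove id).det| ≤ (δ : ℤ) * T.det := by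
      calc |∑ i : Fin n, (-1 : ℤ) ^ ((i.castSucc : Fin (n+1)) : ℕ) * A i.castSucc j *
            (A.submatrix (i.castSucc : Fin (n+1)).succAbove id).det|
          ≤ ∑ i : Fin n, |(-1 : ℤ) ^ ((i.castSucc : Fin (n+1)) : ℕ) * A i.castSucc j *
            (A.submatrix (i.castSucc : Fin (n+1)).succAbove id).det| :=
            Finset.abs_sum_le_sum_abs _ _
        _ ≤ ∑ i : Fin n, A i.castSucc j * (δ : ℤ) := by
            refine Finset.sum_le_sum fun i _ => ?_
            rw [abs_mul, abs_mul, abs_pow, abs_neg, abs_one, one_pow, one_mul,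
              abs_of_nonneg (hnonneg i j)]
            exact mul_le_mul_of_nonneg_left (hsub (i.castSucc : Fin (n+1))).2 (hnonneg i j)
        _ = (∑ i : Fin n, A i.castSucc j) * (δ : ℤ) := by rw [Finset.sum_mul]
        _ ≤ T.det * (δ : ℤ) :=
            mul_le_mul_of_nonneg_right (hcolsum j) (by exact_mod_cast Nat.zero_le δ)
        _ = (δ : ℤ) * T.det := mul_comm _ _
    have hkey : |A (Fin.last n) j| * T.det ≤ (δ : ℤ) * T.det := by
      rw [habs]
      have : (-1 : ℤ) ^ n * A (Fin.last n) j * T.det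
          = -(∑ i : Fin n, (-1 : ℤ) ^ ((i.castSucc : Fin (n+1)) : ℕ) * A i.castSucc j *
            (A.submatrix (i.castSucc : Fin (n+1)).succAbove id).det) := by linarith
      rw [this, abs_neg]
      exact hsumbound
    exact le_of_mul_le_mul_right hkey (lt_of_lt_of_le zero_lt_one hdetT_pos)
  -- assemble
  have hbound : ∀ (i : Fin (n + 1)) (j : Fin n), |A i j| ≤ (δ : ℤ) := by
    intro i j
    induction i using Fin.lastCases with
    | last => exact hlast j
    | cast i => exact hentry_top i j
  intro i j
  calc (|A i j| : ℝ) ≤ ((δ : ℤ) : ℝ) := by exact_mod_cast hbound i j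
    _ = (δ : ℝ) := by push_cast; ring
    _ ≤ Bseq δ ⌈Real.logb 2 δ⌉₊ := delta_le_Bseq δ hδ _
end
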